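/- Let k ≥ 2 be an integer, ε ∈ [0,1], ρ_{AB} a bipartite state, and N_{AB→A'B'} a k-extendible bipartite channel. Then E_k^ε(A';B')_{N(ρ_{AB})} ≤ E_k^ε(A;B)_{ρ_{AB}}, i.e., the k-unextendible ε-hypothesis-testing divergence does not increase under the action of a k-extendible channel. -/

import Mathlib

open Matrix Kronecker
open scoped ComplexOrder

noncomputable section

/-- A quantum state: a positive semidefinite matrix with unit trace. -/
def IsState {n : Type} [Fintype n] (ρ : Matrix n n ℂ) : Prop :=
  ρ.PosSemidef ∧ ρ.trace = 1

/-- A pure quantum state: a rank-one projection onto a unit vector. -/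
def IsPureState {n : Type} [Fintype n] (ρ : Matrix n n ℂ) : Prop :=
  ∃ v : n → ℂ, (∑ i, Complex.normSq (v i)) = 1 ∧ ρ = Matrix.vecMulVec v (star v)

/-- The maximally entangled state `(1/|A|) ∑_{m,m'} |mm⟩⟨m'm'|` on `A ⊗ A`. -/
def maxEnt (A : Type) [Fintype A] [DecidableEq A] : Matrix (A × A) (A × A) ℂ :=
  Matrix.of fun p q => if p.1 = p.2 ∧ q.1 = q.2 then (1 : ℂ) / (Fintype.card A : ℂ) else 0

/-- The marginal of an operator on `A ⊗ B^{⊗ k}` obtained by tracing out all but the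
first copy of `B`. -/
def marginalFirst {A B : Type} [Fintype B] [DecidableEq B] {k : ℕ} (hk : 0 < k)
    (ω : Matrix (A × (Fin k → B)) (A × (Fin k → B)) ℂ) :
    Matrix (A × B) (A × B) ℂ :=
  Matrix.of fun p q => ∑ f : Fin k → B,
    if f ⟨0, hk⟩ = p.2 then ω (p.1, f) (q.1, Function.update f ⟨0, hk⟩ q.2) else 0

/-- Conjugation `W^π ω (W^π)†` of an operator on `A ⊗ B^{⊗ k}` by the unitary permuting
the `k` copies of `B` according to `π`. -/
def permAction {A B : Type} {k : ℕ} (π : Equiv.Perm (Fin k))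
    (ω : Matrix (A × (Fin k → B)) (A × (Fin k → B)) ℂ) :
    Matrix (A × (Fin k → B)) (A × (Fin k → B)) ℂ :=
  Matrix.of fun p q => ω (p.1, p.2 ∘ π) (q.1, q.2 ∘ π)

/-- A bipartite state (or operator) `ρ` on `A ⊗ B` is `k`-extendible with respect to `B`
if it has a permutation-invariant state extension on `A ⊗ B^{⊗ k}`. -/
def kExtendible {A B : Type} [Fintype A] [Fintype B] [DecidableEq B]
    (k : ℕ) (hk : 2 ≤ k) (ρ : Matrix (A × B) (A × B) ℂ) : Prop :=
  ∃ ω : Matrix (A × (Fin k → B)) (A × (Fin k → B)) ℂ,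
    IsState ω ∧ (∀ π : Equiv.Perm (Fin k), permAction π ω = ω) ∧
      marginalFirst (show 0 < k by omega) ω = ρ

/-- The tensor extension `id_R ⊗ Φ` of a linear map on matrices. -/
def tensorId (R : Type) {A B : Type} [Fintype A] [Fintype B]
    (Φ : Matrix A A ℂ →ₗ[ℂ] Matrix B B ℂ) :
    Matrix (R × A) (R × A) ℂ →ₗ[ℂ] Matrix (R × B) (R × B) ℂ where
  toFun X := Matrix.of fun p q => Φ (Matrix.of fun i j => X (p.1, i) (q.1, j)) p.2 q.2
  map_add' X Y := by
    ext p q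
    have h : (Matrix.of fun i j => (X + Y) (p.1, i) (q.1, j))
        = (Matrix.of fun i j => X (p.1, i) (q.1, j))
          + (Matrix.of fun i j => Y (p.1, i) (q.1, j)) := rfl
    show Φ (Matrix.of fun i j => (X + Y) (p.1, i) (q.1, j)) p.2 q.2 = _
    rw [h, map_add]
    rfl
  map_smul' c X := by
    ext p q
    have h : (Matrix.of fun i j => (c • X) (p.1, i) (q.1, j))
        = c • (Matrix.of fun i j => X (p.1, i) (q.1, j)) := rfl
    show Φ (Matrix.of fun i j => (c • X) (p.1, i) (q.1, j)) p.2 q.2 = _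
    rw [h, _root_.map_smul]
    rfl

/-- Complete positivity of a linear map on matrices. -/
def IsCP {A B : Type} [Fintype A] [Fintype B]
    (Φ : Matrix A A ℂ →ₗ[ℂ] Matrix B B ℂ) : Prop :=
  ∀ (R : Type) [Fintype R] (X : Matrix (R × A) (R × A) ℂ),
    X.PosSemidef → ((tensorId R Φ) X).PosSemidef

/-- A quantum channel: a completely positive trace-preserving linear map. -/
def IsCPTP {A B : Type} [Fintype A] [Fintype B]
    (Φ : Matrix A A ℂ →ₗ[ℂ] Matrix B B ℂ) : Prop :=
  IsCP Φ ∧ ∀ X : Matrix A A ℂ, (Φ X).trace = X.trace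

/-- A bipartite channel `N : AB → A'B'` is `k`-extendible if it is a channel and has a
channel extension `M : A B^{⊗k} → A' B'^{⊗k}` whose marginal on the first `B'` copy
reproduces `N` on the corresponding marginal input state, and which is covariant with
respect to simultaneous permutations of the `k` input and output `B` factors. -/
def kExtendibleChannel {A B A' B' : Type} [Fintype A] [Fintype B] [DecidableEq B]
    [Fintype A'] [Fintype B'] [DecidableEq B']
    (k : ℕ) (hk : 2 ≤ k)
    (N : Matrix (A × B) (A × B) ℂ →ₗ[ℂ] Matrix (A' × B') (A' × B') ℂ) : Prop :=
  IsCPTP N ∧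
  ∃ M : Matrix (A × (Fin k → B)) (A × (Fin k → B)) ℂ →ₗ[ℂ]
      Matrix (A' × (Fin k → B')) (A' × (Fin k → B')) ℂ,
    IsCPTP M ∧
    (∀ θ, IsState θ →
      marginalFirst (show 0 < k by omega) (M θ)
        = N (marginalFirst (show 0 < k by omega) θ)) ∧
    (∀ (π : Equiv.Perm (Fin k)) θ, M (permAction π θ) = permAction π (M θ))

/-- The ε-hypothesis-testing divergence `D_h^ε(ρ‖σ)`, valued in the extended reals. -/
def DH {n : Type} [Fintype n] [DecidableEq n] (ε : ℝ) (ρ σ : Matrix n n ℂ) : EReal :=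
  let β : ℝ := sInf { x : ℝ | ∃ Λ : Matrix n n ℂ, Λ.PosSemidef ∧ (1 - Λ).PosSemidef ∧
      1 - ε ≤ ((Λ * ρ).trace).re ∧ x = ((Λ * σ).trace).re }
  if β ≤ 0 then ⊤ else (((- Real.logb 2 β) : ℝ) : EReal)

/-- The k-unextendible ε-hypothesis-testing divergence
`E_k^ε(A;B)_ρ = inf {D_h^ε(ρ‖σ) : σ k-extendible state}`. -/
def EkEps {A B : Type} [Fintype A] [DecidableEq A] [Fintype B] [DecidableEq B]
    (k : ℕ) (hk : 2 ≤ k) (ε : ℝ) (ρ : Matrix (A × B) (A × B) ℂ) : EReal :=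
  sInf { x : EReal | ∃ σ : Matrix (A × B) (A × B) ℂ,
    IsState σ ∧ kExtendible k hk σ ∧ x = DH ε ρ σ }

/-- The max-relative entropy `D_max(ρ‖σ) = inf {λ : ρ ≤ 2^λ σ}`, valued in the extended
reals (equal to `⊤` when the support condition fails). -/
def Dmax {n : Type} [Fintype n] (ρ σ : Matrix n n ℂ) : EReal :=
  sInf { x : EReal | ∃ lam : ℝ, x = (lam : EReal) ∧
    ((((2 : ℝ) ^ lam : ℝ) : ℂ) • σ - ρ).PosSemidef }

/-- The k-unextendible max-relative entropy of a bipartite state: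
`E_k^max(A;B)_ρ = inf {D_max(ρ‖σ) : σ k-extendible state}`. -/
def EkMaxState {A B : Type} [Fintype A] [Fintype B] [DecidableEq B]
    (k : ℕ) (hk : 2 ≤ k) (ρ : Matrix (A × B) (A × B) ℂ) : EReal :=
  sInf { x : EReal | ∃ σ : Matrix (A × B) (A × B) ℂ,
    IsState σ ∧ kExtendible k hk σ ∧ x = Dmax ρ σ }

/-- The k-unextendible max-relative entropy of a channel `N : A → B`:
`E_k^max(N) = sup_ψ E_k^max(R;B)_{(id ⊗ N)(ψ)}` over pure inputs `ψ_{RA}` with `R ≅ A`. -/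
def EkMaxChannel {A B : Type} [Fintype A] [Fintype B] [DecidableEq B]
    (k : ℕ) (hk : 2 ≤ k) (N : Matrix A A ℂ →ₗ[ℂ] Matrix B B ℂ) : EReal :=
  sSup { x : EReal | ∃ ψ : Matrix (A × A) (A × A) ℂ, IsPureState ψ ∧
    x = EkMaxState k hk (tensorId A N ψ) }

/-- The positive semidefinite square root of a positive semidefinite matrix
(the definition `Matrix.PosSemidef.sqrt` of the older Mathlib, since removed). -/
def psdSqrt {n : Type} [Fintype n] [DecidableEq n] {A : Matrix n n ℂ} (hA : A.PosSemidef) :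
    Matrix n n ℂ :=
  (Matrix.PosSemidef.isHermitian hA).eigenvectorUnitary.1 *
    diagonal ((↑) ∘ Real.sqrt ∘ (Matrix.PosSemidef.isHermitian hA).eigenvalues) *
    (star (Matrix.PosSemidef.isHermitian hA).eigenvectorUnitary : Matrix n n ℂ)

open scoped Classical in
/-- The fidelity `F(ρ,σ) = ‖√ρ √σ‖₁² = (Tr √((√ρ√σ)† (√ρ√σ)))²`. -/
def fidelity {n : Type} [Fintype n] [DecidableEq n] (ρ σ : Matrix n n ℂ) : ℝ :=
  if h : ρ.PosSemidef ∧ σ.PosSemidef then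
    ((psdSqrt (Matrix.posSemidef_conjTranspose_mul_self (psdSqrt h.1 * psdSqrt h.2))).trace.re) ^ 2
  else 0

/-- Reshuffling `(X ⊗ Y) ⊗ Z ≃ (X ⊗ Z) ⊗ Y`. -/
def assocShuffle (X Y Z : Type) : (X × Y) × Z ≃ (X × Z) × Y where
  toFun p := ((p.1.1, p.2), p.1.2)
  invFun p := ((p.1.1, p.2), p.1.2)
  left_inv _ := rfl
  right_inv _ := rfl

/-- Reshuffling `(X ⊗ Z) ⊗ W ≃ X ⊗ (W ⊗ Z)`. -/
def outShuffle (X Z W : Type) : (X × Z) × W ≃ X × (W × Z) where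
  toFun p := (p.1.1, (p.2, p.1.2))
  invFun p := ((p.1, p.2.2), p.2.1)
  left_inv _ := rfl
  right_inv _ := rfl

/-- Application of the channel `N : A → B` to the `A` factor of an operator on
`(X ⊗ A) ⊗ Z`, producing an operator on `X ⊗ (B ⊗ Z)`. -/
def channelStep (X Z : Type) [Fintype X] [Fintype Z] {A B : Type} [Fintype A] [Fintype B]
    (N : Matrix A A ℂ →ₗ[ℂ] Matrix B B ℂ)
    (ρ : Matrix ((X × A) × Z) ((X × A) × Z) ℂ) :
    Matrix (X × (B × Z)) (X × (B × Z)) ℂ :=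
  (Matrix.reindex (outShuffle X Z B) (outShuffle X Z B))
    ((tensorId (X × Z) N)
      ((Matrix.reindex (assocShuffle X A Z) (assocShuffle X A Z)) ρ))

/-- A separable bipartite state: a convex combination of product states. -/
def Separable {A B : Type} [Fintype A] [Fintype B]
    (σ : Matrix (A × B) (A × B) ℂ) : Prop :=
  ∃ (m : ℕ) (p : Fin m → ℝ) (τ : Fin m → Matrix A A ℂ) (ω : Fin m → Matrix B B ℂ),
    (∀ x, 0 ≤ p x) ∧ (∑ x, p x = 1) ∧ (∀ x, IsState (τ x)) ∧ (∀ x, IsState (ω x)) ∧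
      σ = ∑ x, ((p x : ℂ) • (τ x ⊗ₖ ω x))

/-- The tensor product `E ⊗ F` of two linear maps on matrices. -/
def tensorMap {A B A' B' : Type} [Fintype A] [Fintype B] [Fintype A'] [Fintype B']
    (E : Matrix A A ℂ →ₗ[ℂ] Matrix A' A' ℂ)
    (F : Matrix B B ℂ →ₗ[ℂ] Matrix B' B' ℂ) :
    Matrix (A × B) (A × B) ℂ →ₗ[ℂ] Matrix (A' × B') (A' × B') ℂ :=
  (Matrix.reindexLinearEquiv ℂ ℂ (Equiv.prodComm B' A') (Equiv.prodComm B' A')).toLinearMap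
    ∘ₗ (tensorId B' E)
    ∘ₗ (Matrix.reindexLinearEquiv ℂ ℂ (Equiv.prodComm A B') (Equiv.prodComm A B')).toLinearMap
    ∘ₗ (tensorId A F)

/-- A one-way LOCC channel from Alice to Bob: `L = ∑_y E^y ⊗ F^y` with `{E^y}` a quantum
instrument on Alice's side and each `F^y` a channel on Bob's side. -/
def IsOneWayLOCC {A B A' B' : Type} [Fintype A] [Fintype B] [Fintype A'] [Fintype B']
    (L : Matrix (A × B) (A × B) ℂ →ₗ[ℂ] Matrix (A' × B') (A' × B') ℂ) : Prop :=
  ∃ (m : ℕ) (E : Fin m → (Matrix A A ℂ →ₗ[ℂ] Matrix A' A' ℂ))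
      (F : Fin m → (Matrix B B ℂ →ₗ[ℂ] Matrix B' B' ℂ)),
    (∀ y, IsCP (E y)) ∧ (∀ X : Matrix A A ℂ, (∑ y, (E y) X).trace = X.trace) ∧
    (∀ y, IsCPTP (F y)) ∧ L = ∑ y, tensorMap (E y) (F y)

end

section DataProcessing

open Matrix
open scoped ComplexOrder

variable {n m : Type} [Fintype n] [DecidableEq n] [Fintype m] [DecidableEq m]

lemma trace_nonneg_of_posSemidef {M : Matrix n n ℂ} (hM : M.PosSemidef) :
    0 ≤ M.trace := by
  classical
  rw [Matrix.trace]
  apply Finset.sum_nonneg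
  intro i _
  have h := hM.dotProduct_mulVec_nonneg (Pi.single i 1)
  simpa [dotProduct, Matrix.mulVec, Pi.single_apply, mul_comm] using h

lemma trace_mul_nonneg_of_posSemidef {P Q : Matrix n n ℂ}
    (hP : P.PosSemidef) (hQ : Q.PosSemidef) : 0 ≤ (P * Q).trace := by
  open scoped MatrixOrder in
  obtain ⟨B, rfl⟩ := CStarAlgebra.nonneg_iff_eq_star_mul_self.mp hP.nonneg
  rw [star_eq_conjTranspose, Matrix.mul_assoc, Matrix.trace_mul_comm]
  exact trace_nonneg_of_posSemidef (hQ.mul_mul_conjTranspose_same B)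

lemma IsCP.pos {A B : Type} [Fintype A] [Fintype B]
    {Φ : Matrix A A ℂ →ₗ[ℂ] Matrix B B ℂ} (hΦ : IsCP Φ)
    {X : Matrix A A ℂ} (hX : X.PosSemidef) : (Φ X).PosSemidef := by
  have h1 : (X.submatrix (Prod.snd : Unit × A → A) Prod.snd).PosSemidef :=
    hX.submatrix _
  have h2 := hΦ Unit (X.submatrix Prod.snd Prod.snd) h1
  have h3 : Φ X = (tensorId Unit Φ (X.submatrix Prod.snd Prod.snd)).submatrix
      (fun b => (((), b) : Unit × B)) (fun b => ((), b)) := rfl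
  rw [h3]
  exact h2.submatrix _
lemma posSemidef_vecMulVec_star {v : n → ℂ} :
    (Matrix.vecMulVec v (star v)).PosSemidef := by
  refine Matrix.PosSemidef.of_dotProduct_mulVec_nonneg ?_ ?_
  · ext p q
    simp [Matrix.vecMulVec_apply, Matrix.conjTranspose_apply, mul_comm]
  · intro x
    have h : star x ⬝ᵥ (Matrix.vecMulVec v (star v)) *ᵥ x
        = star (star v ⬝ᵥ x) * (star v ⬝ᵥ x) := by
      simp only [dotProduct, Matrix.mulVec, Matrix.vecMulVec_apply,
        Pi.star_apply, Finset.mul_sum, Finset.sum_mul, star_sum, star_mul',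
        star_star]
      rw [Finset.sum_comm]
      apply Finset.sum_congr rfl; intro i _
      apply Finset.sum_congr rfl; intro j _
      ring
    rw [h]
    exact star_mul_self_nonneg _

lemma cp_stdBasisMatrix_conjTranspose {A B : Type} [Fintype A] [DecidableEq A]
    [Fintype B] {Φ : Matrix A A ℂ →ₗ[ℂ] Matrix B B ℂ} (hΦ : IsCP Φ) (a b : A) :
    (Φ (Matrix.single a b 1))ᴴ = Φ (Matrix.single b a 1) := by
  classical
  set v : (A × A) → ℂ := fun p => if p.1 = p.2 then 1 else 0 with hv
  set Ω := Matrix.vecMulVec v (star v) with hΩdef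
  have hΩ : Ω.PosSemidef := posSemidef_vecMulVec_star
  have hJ := (hΦ A Ω hΩ).isHermitian
  have h2 : ∀ (a b : A), (Matrix.of fun i j => Ω (a, i) (b, j))
      = Matrix.single a b (1 : ℂ) := by
    intro a b
    ext i j
    simp only [Matrix.of_apply, hΩdef, Matrix.vecMulVec_apply, hv,
      Matrix.single, Pi.star_apply]
    split <;> split <;> simp_all
  have hkey : ∀ (a b : A) (k l : B),
      (starRingEnd ℂ) (Φ (Matrix.single a b 1) l k)
        = Φ (Matrix.single b a 1) k l := by
    intro a b k l
    have h1 := congrFun (congrFun hJ ((b, k) : A × B)) ((a, l) : A × B)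
    rw [Matrix.conjTranspose_apply] at h1
    have e1 : (tensorId A Φ Ω) (a, l) (b, k) = Φ (Matrix.single a b 1) l k := by
      show Φ (Matrix.of fun i j => Ω (a, i) (b, j)) l k = _
      rw [h2 a b]
    have e2 : (tensorId A Φ Ω) (b, k) (a, l) = Φ (Matrix.single b a 1) k l := by
      show Φ (Matrix.of fun i j => Ω (b, i) (a, j)) k l = _
      rw [h2 b a]
    rw [e1, e2] at h1
    exact h1
  ext i j
  rw [Matrix.conjTranspose_apply]
  exact hkey a b i j

/-- The adjoint test operator: pull back a measurement operator through `Φ`. -/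
noncomputable def adjTest {A B : Type} [Fintype A] [DecidableEq A] [Fintype B] [DecidableEq B]
    (Φ : Matrix A A ℂ →ₗ[ℂ] Matrix B B ℂ) (Λ : Matrix B B ℂ) : Matrix A A ℂ :=
  Matrix.of fun i j => (Λ * Φ (Matrix.single j i 1)).trace

lemma adjTest_trace_mul {A B : Type} [Fintype A] [DecidableEq A] [Fintype B] [DecidableEq B]
    (Φ : Matrix A A ℂ →ₗ[ℂ] Matrix B B ℂ) (Λ : Matrix B B ℂ) (ρ : Matrix A A ℂ) :
    (adjTest Φ Λ * ρ).trace = (Λ * Φ ρ).trace := by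
  have hρ : ρ = ∑ a : A, ∑ b : A, (ρ a b) • Matrix.single a b (1 : ℂ) := by
    conv_lhs => rw [Matrix.matrix_eq_sum_single ρ]
    refine Finset.sum_congr rfl fun a _ => Finset.sum_congr rfl fun b _ => ?_
    rw [Matrix.smul_single, smul_eq_mul, mul_one]
  conv_rhs => rw [hρ]
  rw [map_sum]
  simp only [map_sum, _root_.map_smul, Finset.mul_sum, Matrix.mul_smul, Matrix.trace_sum,
    Matrix.trace_smul, smul_eq_mul]
  have expand : (adjTest Φ Λ * ρ).trace
      = ∑ i, ∑ j, (Λ * Φ (Matrix.single j i 1)).trace * ρ j i := by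
    simp [Matrix.trace, Matrix.mul_apply, Matrix.diag, adjTest]
  rw [expand, Finset.sum_comm]
  refine Finset.sum_congr rfl fun a _ => Finset.sum_congr rfl fun b _ => mul_comm _ _

lemma adjTest_posSemidef {A B : Type} [Fintype A] [DecidableEq A] [Fintype B] [DecidableEq B]
    {Φ : Matrix A A ℂ →ₗ[ℂ] Matrix B B ℂ} (hΦ : IsCP Φ)
    {Λ : Matrix B B ℂ} (hΛ : Λ.PosSemidef) : (adjTest Φ Λ).PosSemidef := by
  refine Matrix.PosSemidef.of_dotProduct_mulVec_nonneg ?_ ?_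
  · ext i j
    rw [Matrix.conjTranspose_apply]
    show star ((Λ * Φ (Matrix.single i j 1)).trace)
        = (Λ * Φ (Matrix.single j i 1)).trace
    rw [← Matrix.trace_conjTranspose, Matrix.conjTranspose_mul,
      cp_stdBasisMatrix_conjTranspose hΦ, hΛ.isHermitian.eq, Matrix.trace_mul_comm]
  · intro x
    have h : star x ⬝ᵥ (adjTest Φ Λ) *ᵥ x
        = (adjTest Φ Λ * Matrix.vecMulVec x (star x)).trace := by
      simp only [dotProduct, Matrix.mulVec, Matrix.trace, Matrix.diag,
        Matrix.mul_apply, Matrix.vecMulVec_apply, Pi.star_apply, Finset.mul_sum]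
      refine Finset.sum_congr rfl fun i _ => Finset.sum_congr rfl fun j _ => ?_
      ring
    rw [h, adjTest_trace_mul]
    exact trace_mul_nonneg_of_posSemidef hΛ (hΦ.pos posSemidef_vecMulVec_star)

lemma adjTest_sub {A B : Type} [Fintype A] [DecidableEq A] [Fintype B] [DecidableEq B]
    (Φ : Matrix A A ℂ →ₗ[ℂ] Matrix B B ℂ) (X Y : Matrix B B ℂ) :
    adjTest Φ (X - Y) = adjTest Φ X - adjTest Φ Y := by
  ext i j
  show ((X - Y) * Φ (Matrix.single j i 1)).trace = _
  rw [Matrix.sub_mul, Matrix.trace_sub]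
  rfl

lemma adjTest_one {A B : Type} [Fintype A] [DecidableEq A] [Fintype B] [DecidableEq B]
    {Φ : Matrix A A ℂ →ₗ[ℂ] Matrix B B ℂ}
    (hTP : ∀ X : Matrix A A ℂ, (Φ X).trace = X.trace) :
    adjTest Φ (1 : Matrix B B ℂ) = 1 := by
  ext i j
  show ((1 : Matrix B B ℂ) * Φ (Matrix.single j i 1)).trace = (1 : Matrix A A ℂ) i j
  rw [one_mul, hTP]
  simp [Matrix.trace, Matrix.diag, Matrix.single, Matrix.one_apply, ite_and, eq_comm]

lemma DH_mono {A B : Type} [Fintype A] [DecidableEq A] [Fintype B] [DecidableEq B]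
    (ε : ℝ) (hε0 : 0 ≤ ε) {ρ σ : Matrix A A ℂ} (hρ : IsState ρ) (hσ : σ.PosSemidef)
    {Φ : Matrix A A ℂ →ₗ[ℂ] Matrix B B ℂ} (hΦ : IsCPTP Φ) :
    DH ε (Φ ρ) (Φ σ) ≤ DH ε ρ σ := by
  obtain ⟨hCP, hTP⟩ := hΦ
  set S1 := {x : ℝ | ∃ Λ : Matrix A A ℂ, Λ.PosSemidef ∧ ((1 : Matrix A A ℂ) - Λ).PosSemidef ∧
      1 - ε ≤ ((Λ * ρ).trace).re ∧ x = ((Λ * σ).trace).re} with hS1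
  set S2 := {x : ℝ | ∃ Λ : Matrix B B ℂ, Λ.PosSemidef ∧ ((1 : Matrix B B ℂ) - Λ).PosSemidef ∧
      1 - ε ≤ ((Λ * Φ ρ).trace).re ∧ x = ((Λ * Φ σ).trace).re} with hS2
  have hsub : S2 ⊆ S1 := by
    rintro x ⟨Λ, hΛ, h1Λ, hre, rfl⟩
    refine ⟨adjTest Φ Λ, adjTest_posSemidef hCP hΛ, ?_, ?_, ?_⟩
    · have h : (1 : Matrix A A ℂ) - adjTest Φ Λ = adjTest Φ (1 - Λ) := by
        rw [adjTest_sub, adjTest_one hTP]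
      rw [h]
      exact adjTest_posSemidef hCP h1Λ
    · rw [adjTest_trace_mul]; exact hre
    · rw [adjTest_trace_mul]
  have hne : S2.Nonempty := by
    refine ⟨(((1 : Matrix B B ℂ) * Φ σ).trace).re, 1, Matrix.PosSemidef.one, ?_, ?_, rfl⟩
    · rw [sub_self]; exact Matrix.PosSemidef.zero
    · rw [one_mul, hTP, hρ.2]
      norm_num
      linarith
  have hbdd : BddBelow S1 := by
    refine ⟨0, ?_⟩
    rintro x ⟨Λ, hΛ, _, _, rfl⟩
    have h := trace_mul_nonneg_of_posSemidef hΛ hσ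
    simpa using (Complex.le_def.mp h).1
  have hβ : sInf S1 ≤ sInf S2 := csInf_le_csInf hbdd hne hsub
  show (if sInf S2 ≤ 0 then (⊤ : EReal) else (((- Real.logb 2 (sInf S2)) : ℝ) : EReal))
      ≤ (if sInf S1 ≤ 0 then (⊤ : EReal) else (((- Real.logb 2 (sInf S1)) : ℝ) : EReal))
  split_ifs with h2 h1 h1
  · exact le_refl _
  · exact absurd (hβ.trans h2) h1
  · exact le_top
  · rw [EReal.coe_le_coe_iff]
    have hpos1 : 0 < sInf S1 := lt_of_not_ge h1
    exact neg_le_neg (Real.logb_le_logb_of_le one_lt_two hpos1 hβ)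

end DataProcessing

/-- the k-unextendible ε-hypothesis-testing divergence is monotone under
`k`-extendible channels. -/
theorem EkEps_monotone
    {A B A' B' : Type} [Fintype A] [DecidableEq A] [Fintype B] [DecidableEq B]
    [Fintype A'] [DecidableEq A'] [Fintype B'] [DecidableEq B']
    (k : ℕ) (hk : 2 ≤ k) (ε : ℝ) (hε0 : 0 ≤ ε) (hε1 : ε ≤ 1)
    (ρ : Matrix (A × B) (A × B) ℂ) (hρ : IsState ρ)
    (N : Matrix (A × B) (A × B) ℂ →ₗ[ℂ] Matrix (A' × B') (A' × B') ℂ)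
    (hN : kExtendibleChannel k hk N) :
    EkEps k hk ε (N ρ) ≤ EkEps k hk ε ρ := by
  obtain ⟨hNcptp, M, hMcptp, hmarg, hperm⟩ := hN
  apply sInf_le_sInf_of_isCoinitialFor
  rintro x ⟨σ, hσ, ⟨ω, hω, hπinv, hωmarg⟩, rfl⟩
  refine ⟨DH ε (N ρ) (N σ), ⟨N σ, ?_, ?_, rfl⟩, DH_mono ε hε0 hρ hσ.1 hNcptp⟩
  · exact ⟨hNcptp.1.pos hσ.1, by rw [hNcptp.2, hσ.2]⟩
  · exact ⟨M ω, ⟨hMcptp.1.pos hω.1, by rw [hMcptp.2, hω.2]⟩,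
      fun π => by rw [← hperm, hπinv], by rw [hmarg ω hω, hωmarg]⟩
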